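/- Let P and P̃ be two nested distributions of the same depth T. Then the clairvoyant versions yield an increasing chain of lower bounds for the nested distance: for all 1 ≤ s ≤ t ≤ T, dl(P_{c(s)}, P̃_{c(s)}) ≤ dl(P_{c(t)}, P̃_{c(t)}), and dl(P_{c(t)}, P̃_{c(t)}) ≤ dl(P, P̃) for every t; in particular d_KA(P ∘ ξ^{−1}, P̃ ∘ ξ̃^{−1}) = dl(P_{c(1)}, P̃_{c(1)}) ≤ … ≤ dl(P_{c(T)}, P̃_{c(T)}) = dl(P, P̃). -/

import Mathlib

open MeasureTheory ProbabilityTheory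

noncomputable section

abbrev EucSp (D : ℕ) := EuclideanSpace ℝ (Fin D)

/-- Path space for `k` stages: the `ℓ¹`-product of Euclidean spaces `ℝ^D`, so that
`‖u - v‖ = ∑ t, ‖u t - v t‖` is the distance used for paths. -/
abbrev PathSpace (k D : ℕ) := PiLp 1 (fun _ : Fin k => EucSp D)

instance (k D : ℕ) : MeasurableSpace (PathSpace k D) := WithLp.measurableSpace 1 _
instance (k D : ℕ) : BorelSpace (PathSpace k D) := PiLp.borelSpace 1

/-- A nested distribution of depth `T` and dimension `D`: a probability space together with
a filtration `F` and an `ℝ^D`-valued scenario process `ξ` (relevant stages `1, …, T`)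
adapted to the filtration. -/
structure NestedDistribution (T D : ℕ) where
  Ω : Type
  m : MeasurableSpace Ω
  P : @MeasureTheory.Measure Ω m
  prob : @MeasureTheory.IsProbabilityMeasure Ω m P
  F : ℕ → MeasurableSpace Ω
  F_mono : Monotone F
  F_le : ∀ t, F t ≤ m
  ξ : ℕ → Ω → EucSp D
  adapted : ∀ t, @Measurable _ _ (F t) _ (ξ t)

attribute [instance] NestedDistribution.m

/-- The Kantorovich–Wasserstein distance (of order 1) between two Borel probability
measures on a normed space: `inf_π ∫ ‖x - y‖ dπ` over all couplings `π` of `μ` and `ν`. -/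
def kantorovich {E : Type*} [NormedAddCommGroup E] [MeasurableSpace E]
    (μ ν : Measure E) : ℝ :=
  sInf {r : ℝ | ∃ π : Measure (E × E), IsProbabilityMeasure π ∧
    π.map Prod.fst = μ ∧ π.map Prod.snd = ν ∧ r = ∫ p, ‖p.1 - p.2‖ ∂π}

/-- The (topological) support of a measure: points all of whose open neighbourhoods have
positive measure. -/
def measSupport {α : Type*} [TopologicalSpace α] [MeasurableSpace α] (μ : Measure α) :
    Set α :=
  {x | ∀ U : Set α, IsOpen U → x ∈ U → 0 < μ U}


section ProdHelpers

variable {Ω₁ Ω₂ : Type}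

lemma integrable_fst_prod [MeasurableSpace Ω₁] [MeasurableSpace Ω₂]
    (μ : Measure Ω₁) (ν : Measure Ω₂) [IsFiniteMeasure μ] [IsFiniteMeasure ν]
    {f : Ω₁ → ℝ} (hfm : StronglyMeasurable f) (hfi : Integrable f μ) :
    Integrable (fun p : Ω₁ × Ω₂ => f p.1) (μ.prod ν) := by
  refine (integrable_prod_iff ((hfm.comp_measurable measurable_fst).aestronglyMeasurable)).mpr
    ⟨Filter.Eventually.of_forall fun x => (integrable_const (f x)).congr (by simp), ?_⟩
  have : (fun x => ∫ y : Ω₂, ‖(f ∘ Prod.fst) (x, y)‖ ∂ν) = fun x => (ν Set.univ).toReal * ‖f x‖ := by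
    funext x; simp [integral_const, Measure.real]
  rw [this]
  exact (hfi.norm.const_mul _)

lemma integral_fst_prod [MeasurableSpace Ω₁] [MeasurableSpace Ω₂]
    (μ : Measure Ω₁) (ν : Measure Ω₂) [IsFiniteMeasure μ] [IsFiniteMeasure ν]
    {f : Ω₁ → ℝ} (hfm : StronglyMeasurable f) (hfi : Integrable f μ) :
    ∫ p, f p.1 ∂(μ.prod ν) = (ν Set.univ).toReal * ∫ x, f x ∂μ := by
  rw [integral_prod _ (integrable_fst_prod μ ν hfm hfi)]
  simp only [integral_const, integral_smul, smul_eq_mul, integral_const_mul, Measure.real]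

lemma integrable_snd_prod [MeasurableSpace Ω₁] [MeasurableSpace Ω₂]
    (μ : Measure Ω₁) (ν : Measure Ω₂) [IsFiniteMeasure μ] [IsFiniteMeasure ν]
    {f : Ω₂ → ℝ} (hfm : StronglyMeasurable f) (hfi : Integrable f ν) :
    Integrable (fun p : Ω₁ × Ω₂ => f p.2) (μ.prod ν) := by
  refine (integrable_prod_iff ((hfm.comp_measurable measurable_snd).aestronglyMeasurable)).mpr
    ⟨Filter.Eventually.of_forall fun x => hfi.congr (by simp), ?_⟩
  have : (fun x : Ω₁ => ∫ y : Ω₂, ‖(f ∘ Prod.snd) (x, y)‖ ∂ν) = fun _ => ∫ y, ‖f y‖ ∂ν := by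
    funext x; rfl
  rw [this]
  exact integrable_const _

lemma integral_snd_prod [MeasurableSpace Ω₁] [MeasurableSpace Ω₂]
    (μ : Measure Ω₁) (ν : Measure Ω₂) [IsFiniteMeasure μ] [IsFiniteMeasure ν]
    {f : Ω₂ → ℝ} (hfm : StronglyMeasurable f) (hfi : Integrable f ν) :
    ∫ p, f p.2 ∂(μ.prod ν) = (μ Set.univ).toReal * ∫ y, f y ∂ν := by
  rw [integral_prod _ (integrable_snd_prod μ ν hfm hfi)]
  simp only [integral_const, smul_eq_mul, Measure.real]

lemma prodSigmaAlgebra_eq_generateFrom (m₁ : MeasurableSpace Ω₁) (m₂ : MeasurableSpace Ω₂) :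
    m₁.prod m₂ = MeasurableSpace.generateFrom
      (Set.image2 (· ×ˢ ·) {s | MeasurableSet[m₁] s} {t | MeasurableSet[m₂] t}) :=
  (@generateFrom_eq_prod Ω₁ Ω₂ m₁ m₂ _ _ (@MeasurableSpace.generateFrom_measurableSet Ω₁ m₁)
    (@MeasurableSpace.generateFrom_measurableSet Ω₂ m₂)
    (@isCountablySpanning_measurableSet Ω₁ m₁) (@isCountablySpanning_measurableSet Ω₂ m₂)).symm

lemma condexp_fst_prod (m₁ : MeasurableSpace Ω₁) (m₂ : MeasurableSpace Ω₂)
    [mΩ₁ : MeasurableSpace Ω₁] [mΩ₂ : MeasurableSpace Ω₂]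
    (P : Measure Ω₁) (Q : Measure Ω₂) [IsProbabilityMeasure P] [IsProbabilityMeasure Q]
    (h₁ : m₁ ≤ mΩ₁) (h₂ : m₂ ≤ mΩ₂) {f : Ω₁ → ℝ} (hfm : StronglyMeasurable f)
    (hfi : Integrable f P) :
    ((P.prod Q)[(fun p => f p.1) | m₁.prod m₂]) =ᵐ[P.prod Q] fun p => (P[f | m₁]) p.1 := by
  have hle : m₁.prod m₂ ≤ (inferInstance : MeasurableSpace (Ω₁ × Ω₂)) :=
    sup_le_sup (MeasurableSpace.comap_mono h₁) (MeasurableSpace.comap_mono h₂)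
  have hgm : StronglyMeasurable (P[f|m₁]) := stronglyMeasurable_condExp.mono h₁
  have hgfi : Integrable (P[f|m₁]) P := integrable_condExp
  have hFi : Integrable (fun p : Ω₁ × Ω₂ => f p.1) (P.prod Q) := integrable_fst_prod P Q hfm hfi
  have hGi : Integrable (fun p : Ω₁ × Ω₂ => (P[f|m₁]) p.1) (P.prod Q) :=
    integrable_fst_prod P Q hgm hgfi
  have key : ∀ s, MeasurableSet[m₁.prod m₂] s →
      ∫ p in s, (P[f|m₁]) p.1 ∂(P.prod Q) = ∫ p in s, f p.1 ∂(P.prod Q) := by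
    intro s hs
    refine MeasurableSpace.induction_on_inter (m := m₁.prod m₂)
      (C := fun s _ => ∫ p in s, (P[f|m₁]) p.1 ∂(P.prod Q) = ∫ p in s, f p.1 ∂(P.prod Q))
      (prodSigmaAlgebra_eq_generateFrom m₁ m₂) (@isPiSystem_prod Ω₁ Ω₂ m₁ m₂)
      (by simp) ?_ ?_ ?_ s hs
    · rintro _ ⟨E, hE, F, hF, rfl⟩
      show ∫ p in E ×ˢ F, (P[f|m₁]) p.1 ∂(P.prod Q) = ∫ p in E ×ˢ F, f p.1 ∂(P.prod Q)
      rw [← Measure.prod_restrict,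
        integral_fst_prod (P.restrict E) (Q.restrict F) hgm hgfi.integrableOn,
        integral_fst_prod (P.restrict E) (Q.restrict F) hfm hfi.integrableOn,
        Measure.restrict_apply_univ]
      rw [show ∫ x in E, (P[f|m₁]) x ∂P = ∫ x in E, f x ∂P from setIntegral_condExp h₁ hfi hE]
    · intro t htm hC
      have hc1 := integral_add_compl (hle _ htm) hGi
      have hc2 := integral_add_compl (hle _ htm) hFi
      have htot : ∫ p : Ω₁ × Ω₂, (P[f|m₁]) p.1 ∂(P.prod Q) = ∫ p : Ω₁ × Ω₂, f p.1 ∂(P.prod Q) := by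
        rw [integral_fst_prod P Q hgm hgfi, integral_fst_prod P Q hfm hfi, integral_condExp h₁]
      linarith
    · intro g hd hm hC
      rw [integral_iUnion (fun i => hle _ (hm i)) hd hGi.integrableOn,
        integral_iUnion (fun i => hle _ (hm i)) hd hFi.integrableOn]
      exact tsum_congr hC
  haveI : SigmaFinite ((P.prod Q).trim hle) := by
    have : IsFiniteMeasure ((P.prod Q).trim hle) := by infer_instance
    infer_instance
  exact (ae_eq_condExp_of_forall_setIntegral_eq hle hFi
    (fun s _ _ => hGi.integrableOn) (fun s hs _ => key s hs)
    (StronglyMeasurable.aestronglyMeasurable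
      (stronglyMeasurable_condExp.comp_measurable (@measurable_fst Ω₁ Ω₂ m₁ m₂)))).symm

lemma condexp_snd_prod (m₁ : MeasurableSpace Ω₁) (m₂ : MeasurableSpace Ω₂)
    [mΩ₁ : MeasurableSpace Ω₁] [mΩ₂ : MeasurableSpace Ω₂]
    (P : Measure Ω₁) (Q : Measure Ω₂) [IsProbabilityMeasure P] [IsProbabilityMeasure Q]
    (h₁ : m₁ ≤ mΩ₁) (h₂ : m₂ ≤ mΩ₂) {f : Ω₂ → ℝ} (hfm : StronglyMeasurable f)
    (hfi : Integrable f Q) :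
    ((P.prod Q)[(fun p => f p.2) | m₁.prod m₂]) =ᵐ[P.prod Q] fun p => (Q[f | m₂]) p.2 := by
  have hle : m₁.prod m₂ ≤ (inferInstance : MeasurableSpace (Ω₁ × Ω₂)) :=
    sup_le_sup (MeasurableSpace.comap_mono h₁) (MeasurableSpace.comap_mono h₂)
  have hgm : StronglyMeasurable (Q[f|m₂]) := stronglyMeasurable_condExp.mono h₂
  have hgfi : Integrable (Q[f|m₂]) Q := integrable_condExp
  have hFi : Integrable (fun p : Ω₁ × Ω₂ => f p.2) (P.prod Q) := integrable_snd_prod P Q hfm hfi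
  have hGi : Integrable (fun p : Ω₁ × Ω₂ => (Q[f|m₂]) p.2) (P.prod Q) :=
    integrable_snd_prod P Q hgm hgfi
  have key : ∀ s, MeasurableSet[m₁.prod m₂] s →
      ∫ p in s, (Q[f|m₂]) p.2 ∂(P.prod Q) = ∫ p in s, f p.2 ∂(P.prod Q) := by
    intro s hs
    refine MeasurableSpace.induction_on_inter (m := m₁.prod m₂)
      (C := fun s _ => ∫ p in s, (Q[f|m₂]) p.2 ∂(P.prod Q) = ∫ p in s, f p.2 ∂(P.prod Q))
      (prodSigmaAlgebra_eq_generateFrom m₁ m₂) (@isPiSystem_prod Ω₁ Ω₂ m₁ m₂)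
      (by simp) ?_ ?_ ?_ s hs
    · rintro _ ⟨E, hE, F, hF, rfl⟩
      show ∫ p in E ×ˢ F, (Q[f|m₂]) p.2 ∂(P.prod Q) = ∫ p in E ×ˢ F, f p.2 ∂(P.prod Q)
      rw [← Measure.prod_restrict,
        integral_snd_prod (P.restrict E) (Q.restrict F) hgm hgfi.integrableOn,
        integral_snd_prod (P.restrict E) (Q.restrict F) hfm hfi.integrableOn,
        Measure.restrict_apply_univ]
      rw [show ∫ x in F, (Q[f|m₂]) x ∂Q = ∫ x in F, f x ∂Q from setIntegral_condExp h₂ hfi hF]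
    · intro t htm hC
      have hc1 := integral_add_compl (hle _ htm) hGi
      have hc2 := integral_add_compl (hle _ htm) hFi
      have htot : ∫ p : Ω₁ × Ω₂, (Q[f|m₂]) p.2 ∂(P.prod Q) = ∫ p : Ω₁ × Ω₂, f p.2 ∂(P.prod Q) := by
        rw [integral_snd_prod P Q hgm hgfi, integral_snd_prod P Q hfm hfi, integral_condExp h₂]
      linarith
    · intro g hd hm hC
      rw [integral_iUnion (fun i => hle _ (hm i)) hd hGi.integrableOn,
        integral_iUnion (fun i => hle _ (hm i)) hd hFi.integrableOn]
      exact tsum_congr hC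
  haveI : SigmaFinite ((P.prod Q).trim hle) := by
    have : IsFiniteMeasure ((P.prod Q).trim hle) := by infer_instance
    infer_instance
  exact (ae_eq_condExp_of_forall_setIntegral_eq hle hFi
    (fun s _ _ => hGi.integrableOn) (fun s hs _ => key s hs)
    (StronglyMeasurable.aestronglyMeasurable
      (stronglyMeasurable_condExp.comp_measurable (@measurable_snd Ω₁ Ω₂ m₁ m₂)))).symm

end ProdHelpers

namespace NestedDistribution

/-- A bicausal coupling of two nested distributions: a coupling `π` of the two probability
measures such that for every stage `t = 1, …, T`, conditionally on `F t ⊗ F̃ t`, the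
`π`-probability of `A × Ω̃` (for `A ∈ F T`) agrees with `P(A | F t)`, and symmetrically. -/
def IsBicausalCoupling {T D : ℕ} (N M : NestedDistribution T D)
    (π : Measure (N.Ω × M.Ω)) : Prop :=
  IsProbabilityMeasure π ∧ π.map Prod.fst = N.P ∧ π.map Prod.snd = M.P ∧
  (∀ t, 1 ≤ t → t ≤ T → ∀ A : Set N.Ω, MeasurableSet[N.F T] A →
    (π[((A ×ˢ (Set.univ : Set M.Ω)).indicator fun _ => (1 : ℝ)) | (N.F t).prod (M.F t)])
      =ᵐ[π] fun p => (N.P[(A.indicator fun _ => (1 : ℝ)) | N.F t]) p.1) ∧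
  (∀ t, 1 ≤ t → t ≤ T → ∀ B : Set M.Ω, MeasurableSet[M.F T] B →
    (π[(((Set.univ : Set N.Ω) ×ˢ B).indicator fun _ => (1 : ℝ)) | (N.F t).prod (M.F t)])
      =ᵐ[π] fun p => (M.P[(B.indicator fun _ => (1 : ℝ)) | M.F t]) p.2)

/-- The nested distance of order 1 between two nested distributions:
`inf_π ∫ ∑_{t=1}^T ‖ξ_t(u) - ξ̃_t(v)‖ dπ(u,v)` over all bicausal couplings `π`. -/
def dist {T D : ℕ} (N M : NestedDistribution T D) : ℝ :=
  sInf {r : ℝ | ∃ π : Measure (N.Ω × M.Ω), IsBicausalCoupling N M π ∧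
    r = ∫ p, ∑ t ∈ Finset.Icc 1 T, ‖N.ξ t p.1 - M.ξ t p.2‖ ∂π}

/-- Truncation of a nested distribution to stages `1, …, t`. -/
def truncate {T D : ℕ} (N : NestedDistribution T D) (t : ℕ) : NestedDistribution t D :=
  ⟨N.Ω, N.m, N.P, N.prob, N.F, N.F_mono, N.F_le, N.ξ, N.adapted⟩

/-- The `t`-clairvoyant version of a nested distribution: the filtration is unchanged
before stage `t` and equals `F T` from stage `t` on. -/
def clairvoyant {T D : ℕ} (N : NestedDistribution T D) (t : ℕ) : NestedDistribution T D where
  Ω := N.Ω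
  m := N.m
  P := N.P
  prob := N.prob
  F := fun s => if s < t then N.F s else N.F (max s T)
  F_mono := by
    intro a b hab
    dsimp only
    by_cases hb : b < t
    · have ha : a < t := lt_of_le_of_lt hab hb
      simpa [ha, hb] using N.F_mono hab
    · by_cases ha : a < t
      · simpa [ha, hb] using N.F_mono (le_trans hab (le_max_left b T))
      · simpa [ha, hb] using N.F_mono (max_le_max hab le_rfl)
  F_le := by
    intro s; split <;> exact N.F_le _
  ξ := N.ξ
  adapted := by
    intro s
    show @Measurable _ _ (if s < t then N.F s else N.F (max s T)) _ (N.ξ s)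
    by_cases h : s < t
    · rw [if_pos h]; exact N.adapted s
    · rw [if_neg h]; exact (N.adapted s).mono (N.F_mono (le_max_left s T)) le_rfl

/-- The history map up to stage `k`: `ω ↦ (ξ 1 ω, …, ξ k ω)`. -/
def hist {T D : ℕ} (N : NestedDistribution T D) (k : ℕ) : N.Ω → PathSpace k D :=
  fun ω => WithLp.toLp 1 (fun s => N.ξ (s.1 + 1) ω)

lemma measurable_hist {T D : ℕ} (N : NestedDistribution T D) (k : ℕ) :
    Measurable (N.hist k) :=
  (WithLp.measurable_toLp 1 _).comp
    (measurable_pi_lambda _ fun s => (N.adapted (s.1 + 1)).mono (N.F_le _) le_rfl)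

/-- The law of the history `(ξ 1, …, ξ k)`. -/
def histLaw {T D : ℕ} (N : NestedDistribution T D) (k : ℕ) : Measure (PathSpace k D) :=
  N.P.map (N.hist k)

/-- The law of the whole scenario path `(ξ 1, …, ξ T)` on `ℝ^{D·T}`. -/
def pathLaw {T D : ℕ} (N : NestedDistribution T D) : Measure (PathSpace T D) :=
  N.P.map (N.hist T)


variable {T D : ℕ}

lemma indicator_prod_univ_fst (N M : NestedDistribution T D) (A : Set N.Ω) :
    ((A ×ˢ (Set.univ : Set M.Ω)).indicator fun _ => (1:ℝ))
      = fun p => A.indicator (fun _ => (1:ℝ)) p.1 := by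
  funext p
  by_cases h : p.1 ∈ A <;> simp [Set.indicator_apply, Set.mem_prod, h]

lemma indicator_univ_prod_snd (N M : NestedDistribution T D) (B : Set M.Ω) :
    (((Set.univ : Set N.Ω) ×ˢ B).indicator fun _ => (1:ℝ))
      = fun p => B.indicator (fun _ => (1:ℝ)) p.2 := by
  funext p
  by_cases h : p.2 ∈ B <;> simp [Set.indicator_apply, Set.mem_prod, h]

lemma clairvoyant_F_lt (N : NestedDistribution T D) {s r : ℕ} (h : r < s) :
    (N.clairvoyant s).F r = N.F r := if_pos h

lemma clairvoyant_F_ge (N : NestedDistribution T D) {s r : ℕ} (hs : s ≤ r) (hr : r ≤ T) :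
    (N.clairvoyant s).F r = N.F T := by
  show (if r < s then N.F r else N.F (max r T)) = N.F T
  rw [if_neg (not_lt.mpr hs), Nat.max_eq_right hr]

lemma clairvoyant_F_T (N : NestedDistribution T D) (s : ℕ) :
    (N.clairvoyant s).F T = N.F T := by
  show (if T < s then N.F T else N.F (max T T)) = N.F T
  rw [Nat.max_self]
  split <;> rfl

private lemma mk_congr {Ω : Type} {m : MeasurableSpace Ω} {P : @MeasureTheory.Measure Ω m}
    {prob : @MeasureTheory.IsProbabilityMeasure Ω m P} {F G : ℕ → MeasurableSpace Ω}
    (h : F = G) {ξ : ℕ → Ω → EucSp D} (fm : Monotone F) (fle : ∀ t, F t ≤ m)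
    (ad : ∀ t, @Measurable _ _ (F t) _ (ξ t)) (gm : Monotone G) (gle : ∀ t, G t ≤ m)
    (gad : ∀ t, @Measurable _ _ (G t) _ (ξ t)) :
    (⟨Ω, m, P, prob, F, fm, fle, ξ, ad⟩ : NestedDistribution T D)
      = ⟨Ω, m, P, prob, G, gm, gle, ξ, gad⟩ := by
  subst h; rfl

lemma clairvoyant_top (N : NestedDistribution T D) : N.clairvoyant T = N := by
  obtain ⟨Ω, m, P, prob, F, fm, fle, ξ, ad⟩ := N
  have h : (fun s => if s < T then F s else F (max s T)) = F := by
    funext s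
    by_cases hs : s < T
    · simp [hs]
    · simp [hs, Nat.max_eq_left (not_lt.mp hs)]
  exact mk_congr h _ _ _ _ _ _

/-- At the top σ-algebra, the bicausality condition (first component) holds automatically. -/
lemma condexp_top_fst (N M : NestedDistribution T D) (π : Measure (N.Ω × M.Ω))
    [IsProbabilityMeasure π] {A : Set N.Ω} (hA : MeasurableSet[N.F T] A) :
    (π[((A ×ˢ (Set.univ : Set M.Ω)).indicator fun _ => (1 : ℝ)) | (N.F T).prod (M.F T)])
      =ᵐ[π] fun p => (N.P[(A.indicator fun _ => (1 : ℝ)) | N.F T]) p.1 := by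
  haveI := N.prob
  have hAm : MeasurableSet A := N.F_le T A hA
  have hle : (N.F T).prod (M.F T) ≤ (inferInstance : MeasurableSpace (N.Ω × M.Ω)) :=
    sup_le_sup (MeasurableSpace.comap_mono (N.F_le T)) (MeasurableSpace.comap_mono (M.F_le T))
  haveI : SigmaFinite (π.trim hle) := by
    have : IsFiniteMeasure (π.trim hle) := by infer_instance
    infer_instance
  haveI : SigmaFinite (N.P.trim (N.F_le T)) := by
    have : IsFiniteMeasure (N.P.trim (N.F_le T)) := by infer_instance
    infer_instance
  have h1 : N.P[(A.indicator fun _ => (1 : ℝ)) | N.F T] = A.indicator fun _ => 1 :=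
    condExp_of_stronglyMeasurable (N.F_le T)
      ((@stronglyMeasurable_const _ _ (N.F T) _ _).indicator hA)
      ((integrable_const 1).indicator hAm)
  have hprodmeas : MeasurableSet[(N.F T).prod (M.F T)] (A ×ˢ (Set.univ : Set M.Ω)) :=
    @MeasurableSet.prod _ _ (N.F T) (M.F T) _ _ hA MeasurableSet.univ
  have h2 : π[((A ×ˢ (Set.univ : Set M.Ω)).indicator fun _ => (1 : ℝ)) | (N.F T).prod (M.F T)]
      = (A ×ˢ (Set.univ : Set M.Ω)).indicator fun _ => 1 :=
    condExp_of_stronglyMeasurable hle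
      ((@stronglyMeasurable_const _ _ ((N.F T).prod (M.F T)) _ _).indicator hprodmeas)
      ((integrable_const 1).indicator (hAm.prod MeasurableSet.univ))
  rw [h1, h2, indicator_prod_univ_fst N M A]

lemma condexp_top_snd (N M : NestedDistribution T D) (π : Measure (N.Ω × M.Ω))
    [IsProbabilityMeasure π] {B : Set M.Ω} (hB : MeasurableSet[M.F T] B) :
    (π[(((Set.univ : Set N.Ω) ×ˢ B).indicator fun _ => (1 : ℝ)) | (N.F T).prod (M.F T)])
      =ᵐ[π] fun p => (M.P[(B.indicator fun _ => (1 : ℝ)) | M.F T]) p.2 := by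
  haveI := M.prob
  have hBm : MeasurableSet B := M.F_le T B hB
  have hle : (N.F T).prod (M.F T) ≤ (inferInstance : MeasurableSpace (N.Ω × M.Ω)) :=
    sup_le_sup (MeasurableSpace.comap_mono (N.F_le T)) (MeasurableSpace.comap_mono (M.F_le T))
  haveI : SigmaFinite (π.trim hle) := by
    have : IsFiniteMeasure (π.trim hle) := by infer_instance
    infer_instance
  haveI : SigmaFinite (M.P.trim (M.F_le T)) := by
    have : IsFiniteMeasure (M.P.trim (M.F_le T)) := by infer_instance
    infer_instance
  have h1 : M.P[(B.indicator fun _ => (1 : ℝ)) | M.F T] = B.indicator fun _ => 1 :=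
    condExp_of_stronglyMeasurable (M.F_le T)
      ((@stronglyMeasurable_const _ _ (M.F T) _ _).indicator hB)
      ((integrable_const 1).indicator hBm)
  have hprodmeas : MeasurableSet[(N.F T).prod (M.F T)] ((Set.univ : Set N.Ω) ×ˢ B) :=
    @MeasurableSet.prod _ _ (N.F T) (M.F T) _ _ MeasurableSet.univ hB
  have h2 : π[(((Set.univ : Set N.Ω) ×ˢ B).indicator fun _ => (1 : ℝ)) | (N.F T).prod (M.F T)]
      = ((Set.univ : Set N.Ω) ×ˢ B).indicator fun _ => 1 :=
    condExp_of_stronglyMeasurable hle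
      ((@stronglyMeasurable_const _ _ ((N.F T).prod (M.F T)) _ _).indicator hprodmeas)
      ((integrable_const 1).indicator (MeasurableSet.univ.prod hBm))
  rw [h1, h2, indicator_univ_prod_snd N M B]

/-- The product (independent) coupling is always bicausal. -/
lemma isBicausalCoupling_prod (N M : NestedDistribution T D) :
    IsBicausalCoupling N M (N.P.prod M.P) := by
  haveI := N.prob; haveI := M.prob
  refine ⟨inferInstance, ?_, ?_, ?_, ?_⟩
  · simp [Measure.map_fst_prod]
  · simp [Measure.map_snd_prod]
  · intro t _ _ A hA
    have hAm : MeasurableSet A := N.F_le T A hA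
    rw [indicator_prod_univ_fst N M A]
    exact condexp_fst_prod (N.F t) (M.F t) N.P M.P (N.F_le t) (M.F_le t)
      (stronglyMeasurable_const.indicator hAm) ((integrable_const 1).indicator hAm)
  · intro t _ _ B hB
    have hBm : MeasurableSet B := M.F_le T B hB
    rw [indicator_univ_prod_snd N M B]
    exact condexp_snd_prod (N.F t) (M.F t) N.P M.P (N.F_le t) (M.F_le t)
      (stronglyMeasurable_const.indicator hBm) ((integrable_const 1).indicator hBm)

/-- The defining set of values for the nested distance. -/
def distSet (N M : NestedDistribution T D) : Set ℝ :=
  {r : ℝ | ∃ π : Measure (N.Ω × M.Ω), IsBicausalCoupling N M π ∧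
    r = ∫ p, ∑ t ∈ Finset.Icc 1 T, ‖N.ξ t p.1 - M.ξ t p.2‖ ∂π}

lemma dist_eq_sInf (N M : NestedDistribution T D) : NestedDistribution.dist N M = sInf (distSet N M) := rfl

lemma distSet_nonneg (N M : NestedDistribution T D) {r : ℝ} (hr : r ∈ distSet N M) : 0 ≤ r := by
  obtain ⟨π, _, rfl⟩ := hr
  exact integral_nonneg fun p => Finset.sum_nonneg fun t _ => norm_nonneg _

lemma distSet_bddBelow (N M : NestedDistribution T D) : BddBelow (distSet N M) :=
  ⟨0, fun r hr => distSet_nonneg N M hr⟩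

lemma distSet_nonempty (N M : NestedDistribution T D) : (distSet N M).Nonempty :=
  ⟨_, ⟨N.P.prod M.P, isBicausalCoupling_prod N M, rfl⟩⟩

lemma isBicausalCoupling_clairvoyant_mono (N M : NestedDistribution T D) {s t : ℕ}
    (hs1 : 1 ≤ s) (hst : s ≤ t) {π : Measure (N.Ω × M.Ω)}
    (h : IsBicausalCoupling (N.clairvoyant t) (M.clairvoyant t) π) :
    IsBicausalCoupling (N.clairvoyant s) (M.clairvoyant s) π := by
  obtain ⟨hp, h1, h2, h4, h5⟩ := h
  haveI := hp
  refine ⟨hp, h1, h2, ?_, ?_⟩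
  · intro r hr1 hrT A hA
    rw [clairvoyant_F_T] at hA
    by_cases hrs : r < s
    · have H := h4 r hr1 hrT A (by rwa [clairvoyant_F_T])
      rw [clairvoyant_F_lt N (lt_of_lt_of_le hrs hst), clairvoyant_F_lt M (lt_of_lt_of_le hrs hst)] at H
      rw [clairvoyant_F_lt N hrs, clairvoyant_F_lt M hrs]
      exact H
    · rw [clairvoyant_F_ge N (not_lt.mp hrs) hrT, clairvoyant_F_ge M (not_lt.mp hrs) hrT]
      exact @condexp_top_fst T D N M π hp A hA
  · intro r hr1 hrT B hB
    rw [clairvoyant_F_T] at hB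
    by_cases hrs : r < s
    · have H := h5 r hr1 hrT B (by rwa [clairvoyant_F_T])
      rw [clairvoyant_F_lt N (lt_of_lt_of_le hrs hst), clairvoyant_F_lt M (lt_of_lt_of_le hrs hst)] at H
      rw [clairvoyant_F_lt N hrs, clairvoyant_F_lt M hrs]
      exact H
    · rw [clairvoyant_F_ge N (not_lt.mp hrs) hrT, clairvoyant_F_ge M (not_lt.mp hrs) hrT]
      exact @condexp_top_snd T D N M π hp B hB

lemma isBicausalCoupling_clairvoyant_one (N M : NestedDistribution T D)
    {π : Measure (N.Ω × M.Ω)} (hp : IsProbabilityMeasure π)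
    (h1 : π.map Prod.fst = N.P) (h2 : π.map Prod.snd = M.P) :
    IsBicausalCoupling (N.clairvoyant 1) (M.clairvoyant 1) π := by
  haveI := hp
  refine ⟨hp, h1, h2, ?_, ?_⟩
  · intro r hr1 hrT A hA
    rw [clairvoyant_F_T] at hA
    rw [clairvoyant_F_ge N hr1 hrT, clairvoyant_F_ge M hr1 hrT]
    exact @condexp_top_fst T D N M π hp A hA
  · intro r hr1 hrT B hB
    rw [clairvoyant_F_T] at hB
    rw [clairvoyant_F_ge N hr1 hrT, clairvoyant_F_ge M hr1 hrT]
    exact @condexp_top_snd T D N M π hp B hB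

lemma dist_clairvoyant_mono (N M : NestedDistribution T D) {s t : ℕ}
    (hs1 : 1 ≤ s) (hst : s ≤ t) :
    NestedDistribution.dist (N.clairvoyant s) (M.clairvoyant s) ≤
      NestedDistribution.dist (N.clairvoyant t) (M.clairvoyant t) := by
  rw [dist_eq_sInf, dist_eq_sInf]
  refine csInf_le_csInf (distSet_bddBelow _ _) (distSet_nonempty _ _) ?_
  rintro r ⟨π, hπ, rfl⟩
  exact ⟨π, isBicausalCoupling_clairvoyant_mono N M hs1 hst hπ, rfl⟩


lemma cost_measurable (N M : NestedDistribution T D) :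
    Measurable (fun p : N.Ω × M.Ω => ∑ t ∈ Finset.Icc 1 T, ‖N.ξ t p.1 - M.ξ t p.2‖) :=
  Finset.measurable_sum _ fun t _ =>
    ((((N.adapted t).mono (N.F_le t) le_rfl).comp measurable_fst).sub
      (((M.adapted t).mono (M.F_le t) le_rfl).comp measurable_snd)).norm

lemma cost_eq_norm (N M : NestedDistribution T D) (p : N.Ω × M.Ω) :
    ∑ t ∈ Finset.Icc 1 T, ‖N.ξ t p.1 - M.ξ t p.2‖ = ‖N.hist T p.1 - M.hist T p.2‖ := by
  have h1 : ‖N.hist T p.1 - M.hist T p.2‖ = ∑ i : Fin T, ‖N.ξ (i.1 + 1) p.1 - M.ξ (i.1 + 1) p.2‖ := by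
    rw [PiLp.norm_eq_sum (by norm_num : 0 < (1 : ENNReal).toReal)]
    simp [NestedDistribution.hist]
  rw [h1, Fin.sum_univ_eq_sum_range (fun i => ‖N.ξ (i + 1) p.1 - M.ξ (i + 1) p.2‖),
    ← Finset.Ico_add_one_right_eq_Icc, Finset.sum_Ico_eq_sum_range]
  simp [add_comm]

lemma pathLaw_isProb (N : NestedDistribution T D) : IsProbabilityMeasure N.pathLaw := by
  haveI := N.prob
  exact Measure.isProbabilityMeasure_map (N.measurable_hist T).aemeasurable

/-- The defining set of values for the Kantorovich distance between the path laws. -/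
def kantSet (N M : NestedDistribution T D) : Set ℝ :=
  {r : ℝ | ∃ π : Measure (PathSpace T D × PathSpace T D), IsProbabilityMeasure π ∧
    π.map Prod.fst = N.pathLaw ∧ π.map Prod.snd = M.pathLaw ∧ r = ∫ p, ‖p.1 - p.2‖ ∂π}

lemma kantorovich_eq_sInf (N M : NestedDistribution T D) :
    kantorovich N.pathLaw M.pathLaw = sInf (kantSet N M) := rfl

lemma kantSet_nonneg (N M : NestedDistribution T D) {r : ℝ} (hr : r ∈ kantSet N M) : 0 ≤ r := by
  obtain ⟨π, _, _, _, rfl⟩ := hr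
  exact integral_nonneg fun p => norm_nonneg _

lemma kantSet_bddBelow (N M : NestedDistribution T D) : BddBelow (kantSet N M) :=
  ⟨0, fun r hr => kantSet_nonneg N M hr⟩

lemma kantSet_nonempty (N M : NestedDistribution T D) : (kantSet N M).Nonempty := by
  haveI := pathLaw_isProb N; haveI := pathLaw_isProb M
  exact ⟨_, ⟨N.pathLaw.prod M.pathLaw, inferInstance,
    by simp [Measure.map_fst_prod], by simp [Measure.map_snd_prod], rfl⟩⟩

lemma kant_le_value (N M : NestedDistribution T D) {π : Measure (N.Ω × M.Ω)}
    (hp : IsProbabilityMeasure π)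
    (h1 : π.map Prod.fst = N.P) (h2 : π.map Prod.snd = M.P) :
    kantorovich N.pathLaw M.pathLaw ≤
      ∫ p, ∑ t ∈ Finset.Icc 1 T, ‖N.ξ t p.1 - M.ξ t p.2‖ ∂π := by
  haveI : IsProbabilityMeasure π := hp
  have hm : Measurable (fun p : N.Ω × M.Ω => (N.hist T p.1, M.hist T p.2)) :=
    ((N.measurable_hist T).comp measurable_fst).prodMk ((M.measurable_hist T).comp measurable_snd)
  rw [kantorovich_eq_sInf]
  refine csInf_le (kantSet_bddBelow N M) ⟨π.map (fun p => (N.hist T p.1, M.hist T p.2)),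
    Measure.isProbabilityMeasure_map hm.aemeasurable, ?_, ?_, ?_⟩
  · calc (π.map (fun p : N.Ω × M.Ω => (N.hist T p.1, M.hist T p.2))).map Prod.fst
        = π.map (Prod.fst ∘ fun p : N.Ω × M.Ω => (N.hist T p.1, M.hist T p.2)) :=
          Measure.map_map measurable_fst hm
      _ = π.map (N.hist T ∘ Prod.fst) := rfl
      _ = (π.map Prod.fst).map (N.hist T) := (Measure.map_map (N.measurable_hist T) measurable_fst).symm
      _ = N.pathLaw := by rw [h1]; rfl
  · calc (π.map (fun p : N.Ω × M.Ω => (N.hist T p.1, M.hist T p.2))).map Prod.snd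
        = π.map (Prod.snd ∘ fun p : N.Ω × M.Ω => (N.hist T p.1, M.hist T p.2)) :=
          Measure.map_map measurable_snd hm
      _ = π.map (M.hist T ∘ Prod.snd) := rfl
      _ = (π.map Prod.snd).map (M.hist T) := (Measure.map_map (M.measurable_hist T) measurable_snd).symm
      _ = M.pathLaw := by rw [h2]; rfl
  · rw [integral_map (f := fun q : PathSpace T D × PathSpace T D => ‖q.1 - q.2‖) hm.aemeasurable
      ((continuous_fst.sub continuous_snd).norm).aestronglyMeasurable]
    exact integral_congr_ae (Filter.Eventually.of_forall fun p => cost_eq_norm N M p)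

lemma kant_le_dist_c1 (N M : NestedDistribution T D) :
    kantorovich N.pathLaw M.pathLaw ≤
      NestedDistribution.dist (N.clairvoyant 1) (M.clairvoyant 1) := by
  rw [dist_eq_sInf]
  refine le_csInf (distSet_nonempty _ _) ?_
  rintro r ⟨π, hπ, rfl⟩
  exact kant_le_value N M hπ.1 hπ.2.1 hπ.2.2.1


/-- Any coupling of the path laws can be approximately lifted to a coupling of the underlying
probability spaces, at the price of `ε` in transport cost. -/
lemma exists_lift (N M : NestedDistribution T D)
    (γ : Measure (PathSpace T D × PathSpace T D)) [IsProbabilityMeasure γ]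
    (hfst : γ.map Prod.fst = N.pathLaw) (hsnd : γ.map Prod.snd = M.pathLaw)
    {ε : ℝ} (hε : 0 < ε) :
    ∃ π : Measure (N.Ω × M.Ω), IsProbabilityMeasure π ∧ π.map Prod.fst = N.P ∧
      π.map Prod.snd = M.P ∧
      ∫⁻ p, ENNReal.ofReal (‖N.hist T p.1 - M.hist T p.2‖) ∂π ≤
        (∫⁻ q, ENNReal.ofReal (‖q.1 - q.2‖) ∂γ) + ENNReal.ofReal ε := by
  classical
  haveI := N.prob; haveI := M.prob
  haveI := pathLaw_isProb N; haveI := pathLaw_isProb M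
  haveI : Nonempty (PathSpace T D) := ⟨0⟩
  set δ : ℝ := ε / 4 with hδdef
  have hδ : 0 < δ := by positivity
  set z : ℕ → PathSpace T D := TopologicalSpace.denseSeq (PathSpace T D) with hzdef
  have hzd : DenseRange z := TopologicalSpace.denseRange_denseSeq _
  set C : ℕ → Set (PathSpace T D) :=
    fun k => Metric.ball (z k) δ \ ⋃ (j : ℕ) (_ : j < k), Metric.ball (z j) δ with hCdef
  have hCm : ∀ k, MeasurableSet (C k) := fun k =>
    measurableSet_ball.diff
      (MeasurableSet.iUnion fun j => MeasurableSet.iUnion fun _ => measurableSet_ball)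
  have hCball : ∀ k, C k ⊆ Metric.ball (z k) δ := fun k => Set.diff_subset
  have hCd' : ∀ {j k : ℕ}, j < k → Disjoint (C j) (C k) := by
    intro j k hjk
    refine Set.disjoint_left.mpr fun x hxj hxk => ?_
    exact hxk.2 (Set.mem_iUnion.mpr ⟨j, Set.mem_iUnion.mpr ⟨hjk, hxj.1⟩⟩)
  have hCd : Pairwise (Function.onFun Disjoint C) := by
    intro j k hjk
    rcases lt_or_gt_of_ne hjk with h | h
    · exact hCd' h
    · exact (hCd' h).symm
  have hCu : (⋃ k, C k) = Set.univ := by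
    ext x
    simp only [Set.mem_iUnion, Set.mem_univ, iff_true]
    have hex : ∃ k, x ∈ Metric.ball (z k) δ := by
      obtain ⟨k, hk⟩ := hzd.exists_dist_lt x hδ
      exact ⟨k, by simpa [Metric.mem_ball] using hk⟩
    refine ⟨Nat.find hex, Nat.find_spec hex, ?_⟩
    simp only [Set.mem_iUnion, not_exists]
    intro j hj
    exact Nat.find_min hex hj
  set A : ℕ → Set N.Ω := fun k => N.hist T ⁻¹' C k with hAdef
  set B : ℕ → Set M.Ω := fun l => M.hist T ⁻¹' C l with hBdef
  have hAm : ∀ k, MeasurableSet (A k) := fun k => N.measurable_hist T (hCm k)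
  have hBm : ∀ l, MeasurableSet (B l) := fun l => M.measurable_hist T (hCm l)
  have hμA : ∀ k, N.P (A k) = N.pathLaw (C k) := fun k =>
    (Measure.map_apply (N.measurable_hist T) (hCm k)).symm
  have hνB : ∀ l, M.P (B l) = M.pathLaw (C l) := fun l =>
    (Measure.map_apply (M.measurable_hist T) (hCm l)).symm
  have hγfst : ∀ k, γ (C k ×ˢ (Set.univ : Set (PathSpace T D))) = N.pathLaw (C k) := by
    intro k
    rw [Set.prod_univ, ← Measure.map_apply measurable_fst (hCm k), hfst]
  have hγsnd : ∀ l, γ ((Set.univ : Set (PathSpace T D)) ×ˢ C l) = M.pathLaw (C l) := by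
    intro l
    rw [Set.univ_prod, ← Measure.map_apply measurable_snd (hCm l), hsnd]
  have hγle_fst : ∀ k l, γ (C k ×ˢ C l) ≤ N.pathLaw (C k) := fun k l => by
    rw [← hγfst k]
    exact measure_mono (Set.prod_mono_right (Set.subset_univ _))
  have hγle_snd : ∀ k l, γ (C k ×ˢ C l) ≤ M.pathLaw (C l) := fun k l => by
    rw [← hγsnd l]
    exact measure_mono (Set.prod_mono_left (Set.subset_univ _))
  have hdisj_prod_right : ∀ (S : Set (PathSpace T D)) {U U' : Set (PathSpace T D)},
      Disjoint U U' → Disjoint (S ×ˢ U) (S ×ˢ U') := by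
    intro S U U' h
    exact Set.disjoint_left.mpr fun q hq hq' => Set.disjoint_left.mp h hq.2 hq'.2
  have hdisj_prod_left : ∀ (S : Set (PathSpace T D)) {U U' : Set (PathSpace T D)},
      Disjoint U U' → Disjoint (U ×ˢ S) (U' ×ˢ S) := by
    intro S U U' h
    exact Set.disjoint_left.mpr fun q hq hq' => Set.disjoint_left.mp h hq.1 hq'.1
  have htsum_row : ∀ k, ∑' l, γ (C k ×ˢ C l) = N.pathLaw (C k) := by
    intro k
    rw [← hγfst k, ← measure_iUnion (fun l l' hll' => hdisj_prod_right _ (hCd hll'))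
      (fun l => (hCm k).prod (hCm l))]
    congr 1
    rw [← Set.prod_iUnion, hCu]
  have htsum_col : ∀ l, ∑' k, γ (C k ×ˢ C l) = M.pathLaw (C l) := by
    intro l
    rw [← hγsnd l, ← measure_iUnion (fun k k' hkk' => hdisj_prod_left _ (hCd hkk'))
      (fun k => (hCm k).prod (hCm l))]
    congr 1
    rw [← Set.iUnion_prod_const, hCu]
  set κ : ℕ × ℕ → ENNReal :=
    fun kl => γ (C kl.1 ×ˢ C kl.2) / (N.pathLaw (C kl.1) * M.pathLaw (C kl.2)) with hκdef
  set π : Measure (N.Ω × M.Ω) :=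
    Measure.sum (fun kl : ℕ × ℕ => κ kl • ((N.P.restrict (A kl.1)).prod (M.P.restrict (B kl.2))))
    with hπdef
  have hπapp : ∀ s : Set (N.Ω × M.Ω), MeasurableSet s →
      π s = ∑' kl : ℕ × ℕ, κ kl * ((N.P.restrict (A kl.1)).prod (M.P.restrict (B kl.2))) s := by
    intro s hs
    rw [hπdef, Measure.sum_apply _ hs]
    exact tsum_congr fun kl => rfl
  -- first marginal
  have hfstπ : π.map Prod.fst = N.P := by
    refine Measure.ext fun s hs => ?_
    rw [Measure.map_apply measurable_fst hs, hπapp _ (measurable_fst hs)]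
    have hterm : ∀ kl : ℕ × ℕ,
        κ kl * ((N.P.restrict (A kl.1)).prod (M.P.restrict (B kl.2))) (Prod.fst ⁻¹' s)
          = κ kl * (N.P (s ∩ A kl.1) * M.pathLaw (C kl.2)) := by
      intro kl
      rw [show (Prod.fst ⁻¹' s : Set (N.Ω × M.Ω)) = s ×ˢ Set.univ from (Set.prod_univ).symm,
        Measure.prod_prod, Measure.restrict_apply hs, Measure.restrict_apply_univ, hνB]
    rw [tsum_congr hterm]
    have hrow : ∀ k, (∑' l, κ (k, l) * (N.P (s ∩ A k) * M.pathLaw (C l))) = N.P (s ∩ A k) := by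
      intro k
      by_cases hk : N.pathLaw (C k) = 0
      · have hX : N.P (s ∩ A k) = 0 :=
          le_antisymm (le_trans (measure_mono Set.inter_subset_right) (le_of_eq ((hμA k).trans hk)))
            zero_le
        simp [hX]
      · have hterm2 : ∀ l, κ (k, l) * (N.P (s ∩ A k) * M.pathLaw (C l))
            = N.P (s ∩ A k) * (γ (C k ×ˢ C l) * (N.pathLaw (C k))⁻¹) := by
          intro l
          by_cases hl : M.pathLaw (C l) = 0
          · have hγ0 : γ (C k ×ˢ C l) = 0 :=
              le_antisymm (le_trans (hγle_snd k l) hl.le) zero_le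
            simp [hκdef, hl, hγ0]
          · have hcan : (N.pathLaw (C k) * M.pathLaw (C l))⁻¹ * M.pathLaw (C l)
                = (N.pathLaw (C k))⁻¹ := by
              rw [ENNReal.mul_inv (Or.inl hk) (Or.inl (measure_ne_top _ _)), mul_assoc,
                ENNReal.inv_mul_cancel hl (measure_ne_top _ _), mul_one]
            calc κ (k, l) * (N.P (s ∩ A k) * M.pathLaw (C l))
                = N.P (s ∩ A k) * (γ (C k ×ˢ C l) *
                    ((N.pathLaw (C k) * M.pathLaw (C l))⁻¹ * M.pathLaw (C l))) := by
                  simp only [hκdef, div_eq_mul_inv]; ring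
              _ = N.P (s ∩ A k) * (γ (C k ×ˢ C l) * (N.pathLaw (C k))⁻¹) := by rw [hcan]
        calc ∑' l, κ (k, l) * (N.P (s ∩ A k) * M.pathLaw (C l))
            = ∑' l, N.P (s ∩ A k) * (γ (C k ×ˢ C l) * (N.pathLaw (C k))⁻¹) :=
              tsum_congr hterm2
          _ = N.P (s ∩ A k) * ∑' l, γ (C k ×ˢ C l) * (N.pathLaw (C k))⁻¹ :=
              ENNReal.tsum_mul_left
          _ = N.P (s ∩ A k) * ((∑' l, γ (C k ×ˢ C l)) * (N.pathLaw (C k))⁻¹) := by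
              rw [ENNReal.tsum_mul_right]
          _ = N.P (s ∩ A k) * (N.pathLaw (C k) * (N.pathLaw (C k))⁻¹) := by rw [htsum_row k]
          _ = N.P (s ∩ A k) := by
              rw [ENNReal.mul_inv_cancel hk (measure_ne_top _ _), mul_one]
    have houter : ∑' k, N.P (s ∩ A k) = N.P s := by
      rw [← measure_iUnion
        (fun k k' hkk' => (((hCd hkk').preimage (N.hist T)).mono Set.inter_subset_right
          Set.inter_subset_right))
        (fun k => hs.inter (hAm k)), ← Set.inter_iUnion,
        show (⋃ k, A k) = N.hist T ⁻¹' (⋃ k, C k) from (Set.preimage_iUnion).symm, hCu,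
        Set.preimage_univ, Set.inter_univ]
    calc ∑' kl : ℕ × ℕ, κ kl * (N.P (s ∩ A kl.1) * M.pathLaw (C kl.2))
        = ∑' k, ∑' l, κ (k, l) * (N.P (s ∩ A k) * M.pathLaw (C l)) := ENNReal.tsum_prod'
      _ = ∑' k, N.P (s ∩ A k) := tsum_congr fun k => hrow k
      _ = N.P s := houter
  -- second marginal
  have hsndπ : π.map Prod.snd = M.P := by
    refine Measure.ext fun s hs => ?_
    rw [Measure.map_apply measurable_snd hs, hπapp _ (measurable_snd hs)]
    have hterm : ∀ kl : ℕ × ℕ,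
        κ kl * ((N.P.restrict (A kl.1)).prod (M.P.restrict (B kl.2))) (Prod.snd ⁻¹' s)
          = κ kl * (N.pathLaw (C kl.1) * M.P (s ∩ B kl.2)) := by
      intro kl
      rw [show (Prod.snd ⁻¹' s : Set (N.Ω × M.Ω)) = Set.univ ×ˢ s from (Set.univ_prod).symm,
        Measure.prod_prod, Measure.restrict_apply hs, Measure.restrict_apply_univ, hμA]
    rw [tsum_congr hterm]
    have hcol : ∀ l, (∑' k, κ (k, l) * (N.pathLaw (C k) * M.P (s ∩ B l))) = M.P (s ∩ B l) := by
      intro l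
      by_cases hl : M.pathLaw (C l) = 0
      · have hX : M.P (s ∩ B l) = 0 :=
          le_antisymm (le_trans (measure_mono Set.inter_subset_right) (le_of_eq ((hνB l).trans hl)))
            zero_le
        simp [hX]
      · have hterm2 : ∀ k, κ (k, l) * (N.pathLaw (C k) * M.P (s ∩ B l))
            = M.P (s ∩ B l) * (γ (C k ×ˢ C l) * (M.pathLaw (C l))⁻¹) := by
          intro k
          by_cases hk : N.pathLaw (C k) = 0
          · have hγ0 : γ (C k ×ˢ C l) = 0 :=
              le_antisymm (le_trans (hγle_fst k l) hk.le) zero_le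
            simp [hκdef, hk, hγ0]
          · have hcan : (N.pathLaw (C k) * M.pathLaw (C l))⁻¹ * N.pathLaw (C k)
                = (M.pathLaw (C l))⁻¹ := by
              rw [ENNReal.mul_inv (Or.inl hk) (Or.inl (measure_ne_top _ _)), mul_comm,
                ← mul_assoc, ENNReal.mul_inv_cancel hk (measure_ne_top _ _), one_mul]
            calc κ (k, l) * (N.pathLaw (C k) * M.P (s ∩ B l))
                = M.P (s ∩ B l) * (γ (C k ×ˢ C l) *
                    ((N.pathLaw (C k) * M.pathLaw (C l))⁻¹ * N.pathLaw (C k))) := by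
                  simp only [hκdef, div_eq_mul_inv]; ring
              _ = M.P (s ∩ B l) * (γ (C k ×ˢ C l) * (M.pathLaw (C l))⁻¹) := by rw [hcan]
        calc ∑' k, κ (k, l) * (N.pathLaw (C k) * M.P (s ∩ B l))
            = ∑' k, M.P (s ∩ B l) * (γ (C k ×ˢ C l) * (M.pathLaw (C l))⁻¹) :=
              tsum_congr hterm2
          _ = M.P (s ∩ B l) * ∑' k, γ (C k ×ˢ C l) * (M.pathLaw (C l))⁻¹ :=
              ENNReal.tsum_mul_left
          _ = M.P (s ∩ B l) * ((∑' k, γ (C k ×ˢ C l)) * (M.pathLaw (C l))⁻¹) := by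
              rw [ENNReal.tsum_mul_right]
          _ = M.P (s ∩ B l) * (M.pathLaw (C l) * (M.pathLaw (C l))⁻¹) := by rw [htsum_col l]
          _ = M.P (s ∩ B l) := by
              rw [ENNReal.mul_inv_cancel hl (measure_ne_top _ _), mul_one]
    have houter : ∑' l, M.P (s ∩ B l) = M.P s := by
      rw [← measure_iUnion
        (fun l l' hll' => (((hCd hll').preimage (M.hist T)).mono Set.inter_subset_right
          Set.inter_subset_right))
        (fun l => hs.inter (hBm l)), ← Set.inter_iUnion,
        show (⋃ l, B l) = M.hist T ⁻¹' (⋃ l, C l) from (Set.preimage_iUnion).symm, hCu,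
        Set.preimage_univ, Set.inter_univ]
    calc ∑' kl : ℕ × ℕ, κ kl * (N.pathLaw (C kl.1) * M.P (s ∩ B kl.2))
        = ∑' k, ∑' l, κ (k, l) * (N.pathLaw (C k) * M.P (s ∩ B l)) := ENNReal.tsum_prod'
      _ = ∑' l, ∑' k, κ (k, l) * (N.pathLaw (C k) * M.P (s ∩ B l)) := ENNReal.tsum_comm
      _ = ∑' l, M.P (s ∩ B l) := tsum_congr fun l => hcol l
      _ = M.P s := houter
  haveI hπprob : IsProbabilityMeasure π := by
    constructor
    rw [show (Set.univ : Set (N.Ω × M.Ω)) = Prod.fst ⁻¹' Set.univ from rfl,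
      ← Measure.map_apply measurable_fst MeasurableSet.univ, hfstπ]
    exact measure_univ
  refine ⟨π, hπprob, hfstπ, hsndπ, ?_⟩
  have hcost : ∫⁻ p, ENNReal.ofReal (‖N.hist T p.1 - M.hist T p.2‖) ∂π
      = ∑' kl : ℕ × ℕ, κ kl * ∫⁻ p, ENNReal.ofReal (‖N.hist T p.1 - M.hist T p.2‖)
          ∂((N.P.restrict (A kl.1)).prod (M.P.restrict (B kl.2))) := by
    rw [hπdef, lintegral_sum_measure]
    exact tsum_congr fun kl => lintegral_smul_measure _ _
  have hbound1 : ∀ k l, ∫⁻ p, ENNReal.ofReal (‖N.hist T p.1 - M.hist T p.2‖)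
        ∂((N.P.restrict (A k)).prod (M.P.restrict (B l)))
      ≤ ENNReal.ofReal (Dist.dist (z k) (z l) + 2 * δ) * (N.pathLaw (C k) * M.pathLaw (C l)) := by
    intro k l
    rw [Measure.prod_restrict]
    refine le_trans (setLIntegral_mono
      (g := fun _ => ENNReal.ofReal (Dist.dist (z k) (z l) + 2 * δ)) measurable_const ?_) ?_
    · intro p hp
      have h1 : Dist.dist (N.hist T p.1) (z k) < δ := by
        have := hCball k hp.1
        rwa [Metric.mem_ball] at this
      have h2 : Dist.dist (M.hist T p.2) (z l) < δ := by
        have := hCball l hp.2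
        rwa [Metric.mem_ball] at this
      refine ENNReal.ofReal_le_ofReal ?_
      have htri := dist_triangle4 (N.hist T p.1) (z k) (z l) (M.hist T p.2)
      have hsymm : Dist.dist (z l) (M.hist T p.2) = Dist.dist (M.hist T p.2) (z l) :=
        dist_comm _ _
      calc ‖N.hist T p.1 - M.hist T p.2‖ = Dist.dist (N.hist T p.1) (M.hist T p.2) :=
            (dist_eq_norm _ _).symm
        _ ≤ Dist.dist (N.hist T p.1) (z k) + Dist.dist (z k) (z l)
            + Dist.dist (z l) (M.hist T p.2) := htri
        _ ≤ Dist.dist (z k) (z l) + 2 * δ := by rw [hsymm]; linarith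
    · rw [setLIntegral_const, Measure.prod_prod, hμA, hνB]
  have hbound2 : ∀ k l,
      κ (k, l) * (ENNReal.ofReal (Dist.dist (z k) (z l) + 2 * δ)
        * (N.pathLaw (C k) * M.pathLaw (C l)))
      ≤ ∫⁻ q in C k ×ˢ C l, ENNReal.ofReal (‖q.1 - q.2‖ + 4 * δ) ∂γ := by
    intro k l
    by_cases h0 : γ (C k ×ˢ C l) = 0
    · simp [hκdef, h0]
    · have hk : N.pathLaw (C k) ≠ 0 := fun h =>
        h0 (le_antisymm ((hγle_fst k l).trans h.le) zero_le)
      have hl : M.pathLaw (C l) ≠ 0 := fun h =>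
        h0 (le_antisymm ((hγle_snd k l).trans h.le) zero_le)
      have hne : N.pathLaw (C k) * M.pathLaw (C l) ≠ 0 := mul_ne_zero hk hl
      have hnt : N.pathLaw (C k) * M.pathLaw (C l) ≠ ⊤ :=
        ENNReal.mul_ne_top (measure_ne_top _ _) (measure_ne_top _ _)
      have hcanc : κ (k, l) * (ENNReal.ofReal (Dist.dist (z k) (z l) + 2 * δ)
            * (N.pathLaw (C k) * M.pathLaw (C l)))
          = ENNReal.ofReal (Dist.dist (z k) (z l) + 2 * δ) * γ (C k ×ˢ C l) := by
        simp only [hκdef, div_eq_mul_inv]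
        calc γ (C k ×ˢ C l) * (N.pathLaw (C k) * M.pathLaw (C l))⁻¹
              * (ENNReal.ofReal (Dist.dist (z k) (z l) + 2 * δ)
                * (N.pathLaw (C k) * M.pathLaw (C l)))
            = ENNReal.ofReal (Dist.dist (z k) (z l) + 2 * δ) * γ (C k ×ˢ C l)
              * ((N.pathLaw (C k) * M.pathLaw (C l))⁻¹ * (N.pathLaw (C k) * M.pathLaw (C l))) := by
              ring
          _ = ENNReal.ofReal (Dist.dist (z k) (z l) + 2 * δ) * γ (C k ×ˢ C l) := by
              rw [ENNReal.inv_mul_cancel hne hnt, mul_one]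
      rw [hcanc, show ENNReal.ofReal (Dist.dist (z k) (z l) + 2 * δ) * γ (C k ×ˢ C l)
          = ∫⁻ _ in C k ×ˢ C l, ENNReal.ofReal (Dist.dist (z k) (z l) + 2 * δ) ∂γ from
          (setLIntegral_const _ _).symm]
      refine setLIntegral_mono
        (((continuous_fst.sub continuous_snd).norm.add continuous_const).measurable.ennreal_ofReal)
        ?_
      intro q hq
      refine ENNReal.ofReal_le_ofReal ?_
      have h1 : Dist.dist q.1 (z k) < δ := by
        have := hCball k hq.1
        rwa [Metric.mem_ball] at this
      have h2 : Dist.dist q.2 (z l) < δ := by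
        have := hCball l hq.2
        rwa [Metric.mem_ball] at this
      have htri := dist_triangle4 (z k) q.1 q.2 (z l)
      have hc1 : Dist.dist (z k) q.1 = Dist.dist q.1 (z k) := dist_comm _ _
      have hc2 : Dist.dist q.2 (z l) = Dist.dist q.2 (z l) := rfl
      have hnorm : Dist.dist q.1 q.2 = ‖q.1 - q.2‖ := dist_eq_norm _ _
      linarith
  have hsum : ∑' kl : ℕ × ℕ, ∫⁻ q in C kl.1 ×ˢ C kl.2, ENNReal.ofReal (‖q.1 - q.2‖ + 4 * δ) ∂γ
      = ∫⁻ q, ENNReal.ofReal (‖q.1 - q.2‖ + 4 * δ) ∂γ := by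
    have hd : Pairwise (Function.onFun Disjoint fun kl : ℕ × ℕ => C kl.1 ×ˢ C kl.2) := by
      intro a b hab
      have : a.1 ≠ b.1 ∨ a.2 ≠ b.2 := by
        by_contra h
        push_neg at h
        exact hab (Prod.ext h.1 h.2)
      rcases this with h | h
      · exact Set.disjoint_left.mpr fun q hq hq' => Set.disjoint_left.mp (hCd h) hq.1 hq'.1
      · exact Set.disjoint_left.mpr fun q hq hq' => Set.disjoint_left.mp (hCd h) hq.2 hq'.2
    rw [← lintegral_iUnion (fun kl : ℕ × ℕ => (hCm kl.1).prod (hCm kl.2)) hd]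
    have huniv : (⋃ kl : ℕ × ℕ, C kl.1 ×ˢ C kl.2) = Set.univ := by
      ext q
      simp only [Set.mem_iUnion, Set.mem_univ, iff_true]
      have h1 : q.1 ∈ ⋃ k, C k := hCu ▸ Set.mem_univ _
      have h2 : q.2 ∈ ⋃ l, C l := hCu ▸ Set.mem_univ _
      obtain ⟨k, hk⟩ := Set.mem_iUnion.mp h1
      obtain ⟨l, hl⟩ := Set.mem_iUnion.mp h2
      exact ⟨(k, l), hk, hl⟩
    rw [huniv, Measure.restrict_univ]
  have hfinal : ∫⁻ q, ENNReal.ofReal (‖q.1 - q.2‖ + 4 * δ) ∂γ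
      = (∫⁻ q, ENNReal.ofReal (‖q.1 - q.2‖) ∂γ) + ENNReal.ofReal ε := by
    have heq : ∀ q : PathSpace T D × PathSpace T D,
        ENNReal.ofReal (‖q.1 - q.2‖ + 4 * δ)
          = ENNReal.ofReal (‖q.1 - q.2‖) + ENNReal.ofReal (4 * δ) := fun q =>
      ENNReal.ofReal_add (norm_nonneg _) (by positivity)
    rw [lintegral_congr heq, lintegral_add_right _ measurable_const, lintegral_const,
      measure_univ, mul_one, hδdef]
    norm_num
    rw [mul_comm, ← ENNReal.ofReal_ofNat 4, ← ENNReal.ofReal_mul (by linarith)]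
    congr 1
    ring
  calc ∫⁻ p, ENNReal.ofReal (‖N.hist T p.1 - M.hist T p.2‖) ∂π
      = ∑' kl : ℕ × ℕ, κ kl * ∫⁻ p, ENNReal.ofReal (‖N.hist T p.1 - M.hist T p.2‖)
          ∂((N.P.restrict (A kl.1)).prod (M.P.restrict (B kl.2))) := hcost
    _ ≤ ∑' kl : ℕ × ℕ, κ kl * (ENNReal.ofReal (Dist.dist (z kl.1) (z kl.2) + 2 * δ)
          * (N.pathLaw (C kl.1) * M.pathLaw (C kl.2))) :=
        ENNReal.tsum_le_tsum fun kl => mul_le_mul_right (hbound1 kl.1 kl.2) _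
    _ ≤ ∑' kl : ℕ × ℕ, ∫⁻ q in C kl.1 ×ˢ C kl.2, ENNReal.ofReal (‖q.1 - q.2‖ + 4 * δ) ∂γ :=
        ENNReal.tsum_le_tsum fun kl => hbound2 kl.1 kl.2
    _ = ∫⁻ q, ENNReal.ofReal (‖q.1 - q.2‖ + 4 * δ) ∂γ := hsum
    _ = (∫⁻ q, ENNReal.ofReal (‖q.1 - q.2‖) ∂γ) + ENNReal.ofReal ε := hfinal


lemma prod_cost_lintegral_top (N M : NestedDistribution T D)
    (h : (∫⁻ u, ENNReal.ofReal ‖N.hist T u‖ ∂N.P) = ⊤ ∨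
      (∫⁻ v, ENNReal.ofReal ‖M.hist T v‖ ∂M.P) = ⊤) :
    ∫⁻ p, ENNReal.ofReal ‖N.hist T p.1 - M.hist T p.2‖ ∂(N.P.prod M.P) = ⊤ := by
  haveI := N.prob; haveI := M.prob
  have hm : Measurable fun p : N.Ω × M.Ω => ENNReal.ofReal ‖N.hist T p.1 - M.hist T p.2‖ :=
    (((continuous_fst.sub continuous_snd).norm).measurable.comp
      (((N.measurable_hist T).comp measurable_fst).prodMk
        ((M.measurable_hist T).comp measurable_snd))).ennreal_ofReal
  rcases h with h | h
  · rw [MeasureTheory.lintegral_prod_symm _ hm.aemeasurable]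
    have hinner : ∀ v, ∫⁻ u, ENNReal.ofReal ‖N.hist T u - M.hist T v‖ ∂N.P = ⊤ := by
      intro v
      by_contra hfin
      have hle : ∀ u, ENNReal.ofReal ‖N.hist T u‖
          ≤ ENNReal.ofReal ‖N.hist T u - M.hist T v‖ + ENNReal.ofReal ‖M.hist T v‖ := by
        intro u
        rw [← ENNReal.ofReal_add (norm_nonneg _) (norm_nonneg _)]
        refine ENNReal.ofReal_le_ofReal ?_
        calc ‖N.hist T u‖ = ‖N.hist T u - M.hist T v + M.hist T v‖ := by
              congr 1
              abel
          _ ≤ ‖N.hist T u - M.hist T v‖ + ‖M.hist T v‖ := norm_add_le _ _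
      have hmono := lintegral_mono (μ := N.P) hle
      rw [lintegral_add_right _ measurable_const, lintegral_const, measure_univ, mul_one,
        h] at hmono
      rcases ENNReal.add_eq_top.mp (top_le_iff.mp hmono) with hc | hc
      · exact hfin hc
      · exact ENNReal.ofReal_ne_top hc
    rw [lintegral_congr hinner]
    simp
  · rw [MeasureTheory.lintegral_prod _ hm.aemeasurable]
    have hinner : ∀ u, ∫⁻ v, ENNReal.ofReal ‖N.hist T u - M.hist T v‖ ∂M.P = ⊤ := by
      intro u
      by_contra hfin
      have hle : ∀ v, ENNReal.ofReal ‖M.hist T v‖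
          ≤ ENNReal.ofReal ‖N.hist T u - M.hist T v‖ + ENNReal.ofReal ‖N.hist T u‖ := by
        intro v
        rw [← ENNReal.ofReal_add (norm_nonneg _) (norm_nonneg _)]
        refine ENNReal.ofReal_le_ofReal ?_
        calc ‖M.hist T v‖ = ‖-(N.hist T u - M.hist T v) + N.hist T u‖ := by
              congr 1
              abel
          _ ≤ ‖-(N.hist T u - M.hist T v)‖ + ‖N.hist T u‖ := norm_add_le _ _
          _ = ‖N.hist T u - M.hist T v‖ + ‖N.hist T u‖ := by rw [norm_neg]
      have hmono := lintegral_mono (μ := M.P) hle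
      rw [lintegral_add_right _ measurable_const, lintegral_const, measure_univ, mul_one,
        h] at hmono
      rcases ENNReal.add_eq_top.mp (top_le_iff.mp hmono) with hc | hc
      · exact hfin hc
      · exact ENNReal.ofReal_ne_top hc
    rw [lintegral_congr hinner]
    simp

lemma dist_c1_le_kantElem (N M : NestedDistribution T D) {r : ℝ} (hr : r ∈ kantSet N M) :
    NestedDistribution.dist (N.clairvoyant 1) (M.clairvoyant 1) ≤ r := by
  haveI := N.prob; haveI := M.prob
  obtain ⟨γ, hγp, hγ1, hγ2, rfl⟩ := hr
  haveI : IsProbabilityMeasure γ := hγp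
  have hγm : AEStronglyMeasurable (fun q : PathSpace T D × PathSpace T D => ‖q.1 - q.2‖) γ :=
    ((continuous_fst.sub continuous_snd).norm).aestronglyMeasurable
  have hre : ∫ q, ‖q.1 - q.2‖ ∂γ = (∫⁻ q, ENNReal.ofReal ‖q.1 - q.2‖ ∂γ).toReal :=
    integral_eq_lintegral_of_nonneg_ae (Filter.Eventually.of_forall fun q => norm_nonneg _) hγm
  have hval : ∀ π : Measure (N.Ω × M.Ω),
      ∫ p, ∑ t ∈ Finset.Icc 1 T, ‖N.ξ t p.1 - M.ξ t p.2‖ ∂π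
        = (∫⁻ p, ENNReal.ofReal ‖N.hist T p.1 - M.hist T p.2‖ ∂π).toReal := by
    intro π
    have hmeas : Measurable fun p : N.Ω × M.Ω => ‖N.hist T p.1 - M.hist T p.2‖ :=
      ((continuous_fst.sub continuous_snd).norm).measurable.comp
        (((N.measurable_hist T).comp measurable_fst).prodMk
          ((M.measurable_hist T).comp measurable_snd))
    have h1 : ∫ p, ∑ t ∈ Finset.Icc 1 T, ‖N.ξ t p.1 - M.ξ t p.2‖ ∂π
        = ∫ p, ‖N.hist T p.1 - M.hist T p.2‖ ∂π :=
      integral_congr_ae (Filter.Eventually.of_forall fun p => cost_eq_norm N M p)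
    rw [h1, integral_eq_lintegral_of_nonneg_ae
      (Filter.Eventually.of_forall fun p => norm_nonneg _) hmeas.aestronglyMeasurable]
  by_cases hfin : (∫⁻ q, ENNReal.ofReal ‖q.1 - q.2‖ ∂γ) = ⊤
  · -- non-integrable case: both sides are `0`
    have hμ_or : (∫⁻ u, ENNReal.ofReal ‖N.hist T u‖ ∂N.P) = ⊤ ∨
        (∫⁻ v, ENNReal.ofReal ‖M.hist T v‖ ∂M.P) = ⊤ := by
      by_contra hcon
      push_neg at hcon
      have hle : ∀ q : PathSpace T D × PathSpace T D,
          ENNReal.ofReal ‖q.1 - q.2‖ ≤ ENNReal.ofReal ‖q.1‖ + ENNReal.ofReal ‖q.2‖ := by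
        intro q
        rw [← ENNReal.ofReal_add (norm_nonneg _) (norm_nonneg _)]
        exact ENNReal.ofReal_le_ofReal (norm_sub_le _ _)
      have h1 := lintegral_mono (μ := γ) hle
      rw [lintegral_add_left ((measurable_fst.norm).ennreal_ofReal)] at h1
      have e1 : ∫⁻ q : PathSpace T D × PathSpace T D, ENNReal.ofReal ‖q.1‖ ∂γ
          = ∫⁻ u, ENNReal.ofReal ‖N.hist T u‖ ∂N.P := by
        calc ∫⁻ q : PathSpace T D × PathSpace T D, ENNReal.ofReal ‖q.1‖ ∂γ
            = ∫⁻ x, ENNReal.ofReal ‖x‖ ∂(γ.map Prod.fst) :=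
              (lintegral_map (measurable_norm.ennreal_ofReal) measurable_fst).symm
          _ = ∫⁻ x, ENNReal.ofReal ‖x‖ ∂N.pathLaw := by rw [hγ1]
          _ = ∫⁻ u, ENNReal.ofReal ‖N.hist T u‖ ∂N.P :=
              lintegral_map (measurable_norm.ennreal_ofReal) (N.measurable_hist T)
      have e2 : ∫⁻ q : PathSpace T D × PathSpace T D, ENNReal.ofReal ‖q.2‖ ∂γ
          = ∫⁻ v, ENNReal.ofReal ‖M.hist T v‖ ∂M.P := by
        calc ∫⁻ q : PathSpace T D × PathSpace T D, ENNReal.ofReal ‖q.2‖ ∂γ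
            = ∫⁻ x, ENNReal.ofReal ‖x‖ ∂(γ.map Prod.snd) :=
              (lintegral_map (measurable_norm.ennreal_ofReal) measurable_snd).symm
          _ = ∫⁻ x, ENNReal.ofReal ‖x‖ ∂M.pathLaw := by rw [hγ2]
          _ = ∫⁻ v, ENNReal.ofReal ‖M.hist T v‖ ∂M.P :=
              lintegral_map (measurable_norm.ennreal_ofReal) (M.measurable_hist T)
      rw [e1, e2, hfin] at h1
      rcases ENNReal.add_eq_top.mp (top_le_iff.mp h1) with hc | hc
      · exact hcon.1 hc
      · exact hcon.2 hc
    have htop := prod_cost_lintegral_top N M hμ_or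
    have h0 : ∫ p, ∑ t ∈ Finset.Icc 1 T, ‖N.ξ t p.1 - M.ξ t p.2‖ ∂(N.P.prod M.P) = 0 := by
      rw [hval (N.P.prod M.P), htop]
      simp
    have hmem : (0 : ℝ) ∈ distSet (N.clairvoyant 1) (M.clairvoyant 1) :=
      ⟨N.P.prod M.P, isBicausalCoupling_clairvoyant_one N M
        (inferInstance : IsProbabilityMeasure (N.P.prod M.P))
        (by simp [Measure.map_fst_prod] : (N.P.prod M.P).map Prod.fst = N.P)
        (by simp [Measure.map_snd_prod] : (N.P.prod M.P).map Prod.snd = M.P), h0.symm⟩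
    have hr0 : ∫ q, ‖q.1 - q.2‖ ∂γ = 0 := by
      rw [hre, hfin]
      simp
    rw [hr0, dist_eq_sInf]
    exact csInf_le (distSet_bddBelow _ _) hmem
  · refine le_of_forall_pos_le_add fun ε hε => ?_
    obtain ⟨π, hπp, hπ1, hπ2, hπle⟩ := exists_lift N M γ hγ1 hγ2 hε
    haveI : IsProbabilityMeasure π := hπp
    have hmem : (∫ p, ∑ t ∈ Finset.Icc 1 T, ‖N.ξ t p.1 - M.ξ t p.2‖ ∂π)
        ∈ distSet (N.clairvoyant 1) (M.clairvoyant 1) :=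
      ⟨π, isBicausalCoupling_clairvoyant_one N M hπp hπ1 hπ2, rfl⟩
    rw [dist_eq_sInf]
    refine le_trans (csInf_le (distSet_bddBelow _ _) hmem) ?_
    rw [hval π, hre]
    have hmono : (∫⁻ p, ENNReal.ofReal ‖N.hist T p.1 - M.hist T p.2‖ ∂π).toReal
        ≤ ((∫⁻ q, ENNReal.ofReal ‖q.1 - q.2‖ ∂γ) + ENNReal.ofReal ε).toReal :=
      ENNReal.toReal_mono (ENNReal.add_ne_top.mpr ⟨hfin, ENNReal.ofReal_ne_top⟩) hπle
    rwa [ENNReal.toReal_add hfin ENNReal.ofReal_ne_top, ENNReal.toReal_ofReal hε.le] at hmono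

lemma dist_c1_eq_kant (N M : NestedDistribution T D) :
    NestedDistribution.dist (N.clairvoyant 1) (M.clairvoyant 1)
      = kantorovich N.pathLaw M.pathLaw := by
  refine le_antisymm ?_ (kant_le_dist_c1 N M)
  rw [kantorovich_eq_sInf]
  exact le_csInf (kantSet_nonempty N M) fun r hr => dist_c1_le_kantElem N M hr

end NestedDistribution

open NestedDistribution in
/-- (Lemma 1: chain of lower bounds.) For two nested distributions `P`, `P̃` of depth `T`,
the clairvoyant versions yield an increasing chain of lower bounds for the nested distance:
`d_KA(P∘ξ⁻¹, P̃∘ξ̃⁻¹) = dl(P_{c(1)}, P̃_{c(1)}) ≤ … ≤ dl(P_{c(T)}, P̃_{c(T)}) = dl(P, P̃)`. -/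
theorem clairvoyant_chain_lower_bounds (T D : ℕ) (N M : NestedDistribution T D) :
    (∀ s t : ℕ, 1 ≤ s → s ≤ t → t ≤ T →
      NestedDistribution.dist (N.clairvoyant s) (M.clairvoyant s) ≤
        NestedDistribution.dist (N.clairvoyant t) (M.clairvoyant t)) ∧
    (∀ t : ℕ, 1 ≤ t → t ≤ T →
      NestedDistribution.dist (N.clairvoyant t) (M.clairvoyant t) ≤
        NestedDistribution.dist N M) ∧
    NestedDistribution.dist (N.clairvoyant 1) (M.clairvoyant 1) =
      kantorovich N.pathLaw M.pathLaw ∧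
    NestedDistribution.dist (N.clairvoyant T) (M.clairvoyant T) =
      NestedDistribution.dist N M := by
  refine ⟨fun s t hs hst _ => dist_clairvoyant_mono N M hs hst, ?_, ?_, ?_⟩
  · intro t ht1 htT
    have h := dist_clairvoyant_mono N M ht1 htT
    rwa [clairvoyant_top N, clairvoyant_top M] at h
  · exact dist_c1_eq_kant N M
  · rw [clairvoyant_top N, clairvoyant_top M]

end
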